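/- arXiv:1812.02878 — 4 statements merged into one kernel-verified Lean document; each statement's English description precedes it below -/
import Mathlib

section
/- Under the PL-game assumptions (each h_θ(α) = −f(θ, α) is μ-PL with attained maximum, A(θ) = argmax_α f(θ, α) nonempty and closed, and the gradient Lipschitz continuity assumptions with constants L₁₁, L₂₂, L₁₂), for any θ and any two maximizers α₁, α₂ ∈ A(θ), the partial gradients with respect to θ coincide: ∇_θ f(θ, α₁) = ∇_θ f(θ, α₂). -/
/-!
At a maximizer `α` of `f (θ, ·)` the `α`-gradient vanishes; moving `θ` to `θ'` it grows by at most
`L₁₂ ‖θ' - θ‖`, so the PL inequality bounds the gap `g θ' - f (θ', α)` by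
`L₁₂² / (2μ) ‖θ' - θ‖²`. For two maximizers `α₁, α₂` both gaps are quadratic in `θ' - θ`, hence so
is `f (·, α₁) - f (·, α₂)`, which therefore has zero derivative at `θ`.
-/

section Calculus

variable {E G : Type*} [NormedAddCommGroup E] [NormedSpace ℝ E]
  [NormedAddCommGroup G] [NormedSpace ℝ G]

theorem hasFDerivAt_zero_of_norm_le_sq {φ : E → G} {x₀ : E} {C : ℝ}
    (hφ : ∀ x, ‖φ x‖ ≤ C * ‖x - x₀‖ ^ 2) : HasFDerivAt φ (0 : E →L[ℝ] G) x₀ :=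
  (Asymptotics.IsBigO.of_bound C (Filter.Eventually.of_forall fun x => by
    simpa only [norm_pow, norm_norm] using hφ x)).hasFDerivAt one_lt_two

/-- If `u - v` is differentiable at `x`, then `u` and `v` are
either both differentiable there or both have the junk derivative `0`. -/
theorem fderiv_eq_of_hasFDerivAt_sub_zero {u v : E → G} {x : E}
    (h : HasFDerivAt (u - v) (0 : E →L[ℝ] G) x) : fderiv ℝ u x = fderiv ℝ v x := by
  by_cases hv : DifferentiableAt ℝ v x
  · simpa only [sub_add_cancel, zero_add] using (h.add hv.hasFDerivAt).fderiv
  · have hu : ¬DifferentiableAt ℝ u x := fun hu => hv (by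
      simpa only [sub_sub_cancel] using hu.sub h.differentiableAt)
    rw [fderiv_zero_of_not_differentiableAt hu, fderiv_zero_of_not_differentiableAt hv]

end Calculus

theorem IsLocalMax.gradient_eq_zero {F : Type*} [NormedAddCommGroup F] [InnerProductSpace ℝ F]
    [CompleteSpace F] {φ : F → ℝ} {a : F} (h : IsLocalMax φ a) : gradient φ a = 0 := by
  rw [gradient, h.fderiv_eq_zero, map_zero]

section PLGame

variable {E F : Type*} [NormedAddCommGroup E] [NormedAddCommGroup F] [InnerProductSpace ℝ F]
  [CompleteSpace F] {f : E × F → ℝ} {g : E → ℝ} {μ L : ℝ}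

theorem sub_le_sq_of_pl_of_mem_argmax (hμ : 0 < μ)
    (hL : ∀ (α : F) (θ₁ θ₂ : E),
      ‖gradient (fun a => f (θ₁, a)) α - gradient (fun a => f (θ₂, a)) α‖ ≤ L * ‖θ₁ - θ₂‖)
    (hub : ∀ θ α, f (θ, α) ≤ g θ)
    (hPL : ∀ θ α, μ * (g θ - f (θ, α)) ≤ (1 / 2) * ‖gradient (fun a => f (θ, a)) α‖ ^ 2)
    {θ : E} {α : F} (hα : f (θ, α) = g θ) (θ' : E) :
    g θ' - f (θ', α) ≤ L ^ 2 / (2 * μ) * ‖θ' - θ‖ ^ 2 := by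
  have hcrit : gradient (fun a => f (θ, a)) α = 0 :=
    IsLocalMax.gradient_eq_zero <|
      Filter.Eventually.of_forall fun a => by simpa only [hα] using hub θ a
  have hgrad : ‖gradient (fun a => f (θ', a)) α‖ ≤ L * ‖θ' - θ‖ := by
    simpa only [hcrit, sub_zero] using hL α θ' θ
  have hgap : μ * (g θ' - f (θ', α)) ≤ (1 / 2) * (L * ‖θ' - θ‖) ^ 2 :=
    (hPL θ' α).trans (by gcongr)
  rw [div_mul_eq_mul_div, le_div_iff₀ (by positivity)]
  linarith

theorem abs_sub_le_sq_of_pl_of_mem_argmax (hμ : 0 < μ)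
    (hL : ∀ (α : F) (θ₁ θ₂ : E),
      ‖gradient (fun a => f (θ₁, a)) α - gradient (fun a => f (θ₂, a)) α‖ ≤ L * ‖θ₁ - θ₂‖)
    (hub : ∀ θ α, f (θ, α) ≤ g θ)
    (hPL : ∀ θ α, μ * (g θ - f (θ, α)) ≤ (1 / 2) * ‖gradient (fun a => f (θ, a)) α‖ ^ 2)
    {θ : E} {α₁ α₂ : F} (h₁ : f (θ, α₁) = g θ) (h₂ : f (θ, α₂) = g θ) (θ' : E) :
    |f (θ', α₁) - f (θ', α₂)| ≤ L ^ 2 / (2 * μ) * ‖θ' - θ‖ ^ 2 := by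
  have gap₁ := sub_le_sq_of_pl_of_mem_argmax hμ hL hub hPL h₁ θ'
  have gap₂ := sub_le_sq_of_pl_of_mem_argmax hμ hL hub hPL h₂ θ'
  have := hub θ' α₁
  have := hub θ' α₂
  rw [abs_le]
  constructor <;> linarith

end PLGame

theorem grad_theta_constant_on_argmax_general
    (m n : ℕ)
    (f : EuclideanSpace ℝ (Fin m) × EuclideanSpace ℝ (Fin n) → ℝ)
    (μ L₁₂ : ℝ) (g : EuclideanSpace ℝ (Fin m) → ℝ)
    (hμ : 0 < μ)
    (hL12a : ∀ (α : EuclideanSpace ℝ (Fin n)) (θ₁ θ₂ : EuclideanSpace ℝ (Fin m)),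
      ‖gradient (fun a => f (θ₁, a)) α - gradient (fun a => f (θ₂, a)) α‖ ≤ L₁₂ * ‖θ₁ - θ₂‖)
    (hub : ∀ θ α, f (θ, α) ≤ g θ)
    (hPL : ∀ θ α, μ * (g θ - f (θ, α)) ≤ (1 / 2) * ‖gradient (fun a => f (θ, a)) α‖ ^ 2) :
    ∀ (θ : EuclideanSpace ℝ (Fin m)) (α₁ α₂ : EuclideanSpace ℝ (Fin n)),
      f (θ, α₁) = g θ → f (θ, α₂) = g θ →
      gradient (fun t => f (t, α₁)) θ = gradient (fun t => f (t, α₂)) θ := by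
  intro θ α₁ α₂ h₁ h₂
  have hflat : HasFDerivAt (fun t => f (t, α₁) - f (t, α₂)) (0 : _ →L[ℝ] ℝ) θ :=
    hasFDerivAt_zero_of_norm_le_sq fun θ' =>
      abs_sub_le_sq_of_pl_of_mem_argmax hμ hL12a hub hPL h₁ h₂ θ'
  rw [gradient, gradient, fderiv_eq_of_hasFDerivAt_sub_zero hflat]

/-- Under the PL-game assumptions, for any `θ` the partial gradient `∇_θ f(θ, ·)` is
constant on the set of maximizers `A(θ)`: `∇_θ f(θ, α₁) = ∇_θ f(θ, α₂)` for all
`α₁, α₂ ∈ A(θ)`. -/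
theorem grad_theta_constant_on_argmax
    (m n : ℕ)
    (f : EuclideanSpace ℝ (Fin m) × EuclideanSpace ℝ (Fin n) → ℝ)
    (μ L₁₁ L₂₂ L₁₂ : ℝ) (g : EuclideanSpace ℝ (Fin m) → ℝ)
    (hμ : 0 < μ)
    (hf : ContDiff ℝ 2 f)
    (hL11 : ∀ (α : EuclideanSpace ℝ (Fin n)) (θ₁ θ₂ : EuclideanSpace ℝ (Fin m)),
      ‖gradient (fun t => f (t, α)) θ₁ - gradient (fun t => f (t, α)) θ₂‖ ≤ L₁₁ * ‖θ₁ - θ₂‖)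
    (hL22 : ∀ (θ : EuclideanSpace ℝ (Fin m)) (α₁ α₂ : EuclideanSpace ℝ (Fin n)),
      ‖gradient (fun a => f (θ, a)) α₁ - gradient (fun a => f (θ, a)) α₂‖ ≤ L₂₂ * ‖α₁ - α₂‖)
    (hL12a : ∀ (α : EuclideanSpace ℝ (Fin n)) (θ₁ θ₂ : EuclideanSpace ℝ (Fin m)),
      ‖gradient (fun a => f (θ₁, a)) α - gradient (fun a => f (θ₂, a)) α‖ ≤ L₁₂ * ‖θ₁ - θ₂‖)
    (hL12b : ∀ (θ : EuclideanSpace ℝ (Fin m)) (α₁ α₂ : EuclideanSpace ℝ (Fin n)),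
      ‖gradient (fun t => f (t, α₁)) θ - gradient (fun t => f (t, α₂)) θ‖ ≤ L₁₂ * ‖α₁ - α₂‖)
    (hub : ∀ θ α, f (θ, α) ≤ g θ)
    (hattained : ∀ θ, ∃ α, f (θ, α) = g θ)
    (hclosed : ∀ θ, IsClosed {α | f (θ, α) = g θ})
    (hPL : ∀ θ α, μ * (g θ - f (θ, α)) ≤ (1 / 2) * ‖gradient (fun a => f (θ, a)) α‖ ^ 2) :
    ∀ (θ : EuclideanSpace ℝ (Fin m)) (α₁ α₂ : EuclideanSpace ℝ (Fin n)),
      f (θ, α₁) = g θ → f (θ, α₂) = g θ →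
      gradient (fun t => f (t, α₁)) θ = gradient (fun t => f (t, α₂)) θ :=
  grad_theta_constant_on_argmax_general m n f μ L₁₂ g hμ hL12a hub hPL
end

section
/- Under the PL-game assumptions, the function g(θ) = max_α f(θ, α) is differentiable with ∇g(θ) = ∇_θ f(θ, α) for every α ∈ A(θ) (a Danskin-type result): for each θ and each α ∈ A(θ), the map θ ↦ g(θ) has gradient ∇_θ f(θ, α) at θ. -/
/-! Since `f (θ₀, ·)` is maximal at `α`, its gradient vanishes there, so by the cross-Lipschitz
bound the gradient of `f (θ, ·)` at `α` is `O(‖θ - θ₀‖)`, and the PL inequality turns this into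
`0 ≤ g θ - f (θ, α) = O(‖θ - θ₀‖²)`. Thus `g` agrees with `f (·, α)` to second order at `θ₀`,
and the latter has gradient `∇_θ f (θ₀, α)` with a quadratic remainder because its gradient is
Lipschitz. -/

open Filter Metric Asymptotics
open scoped NNReal RealInnerProductSpace Topology

variable {F : Type*} [NormedAddCommGroup F] [InnerProductSpace ℝ F] [CompleteSpace F]

theorem hasGradientAt_of_abs_sub_sub_inner_le {g : F → ℝ} {v x : F} {C : ℝ}
    (h : ∀ᶠ y in 𝓝 x, |g y - g x - ⟪v, y - x⟫| ≤ C * ‖y - x‖ ^ 2) :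
    HasGradientAt g v x := by
  rw [hasGradientAt_iff_isLittleO]
  refine (IsBigO.of_bound C ?_).trans_isLittleO
    ((isLittleO_norm_pow_id one_lt_two).comp_tendsto (tendsto_sub_nhds_zero_iff.2 tendsto_id))
  simpa only [Real.norm_eq_abs, Function.comp_apply, abs_pow, abs_norm] using h

theorem abs_sub_sub_inner_gradient_le {φ : F → ℝ} {L : ℝ≥0}
    (hφ : Differentiable ℝ φ) (hL : LipschitzWith L (gradient φ)) (x y : F) :
    |φ y - φ x - ⟪gradient φ x, y - x⟫| ≤ L * ‖y - x‖ ^ 2 := by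
  have hbound : ∀ z ∈ closedBall x ‖y - x‖, ‖fderiv ℝ φ z - fderiv ℝ φ x‖ ≤ L * ‖y - x‖ := by
    intro z hz
    rw [← toDual_gradient, ← toDual_gradient, ← map_sub, LinearIsometryEquiv.norm_map,
      ← dist_eq_norm]
    exact (hL.dist_le_mul z x).trans (by gcongr; exact hz)
  have := (convex_closedBall x ‖y - x‖).norm_image_sub_le_of_norm_fderiv_le' (fun z _ => hφ z)
    hbound (mem_closedBall_self (norm_nonneg _)) (mem_closedBall.2 (dist_eq_norm y x).le)
  rwa [← inner_gradient_left, Real.norm_eq_abs, mul_assoc, ← sq] at this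

theorem danskin_gradient_of_max_general
    (m n : ℕ)
    (f : EuclideanSpace ℝ (Fin m) × EuclideanSpace ℝ (Fin n) → ℝ)
    (μ L₁₁ L₁₂ : ℝ) (g : EuclideanSpace ℝ (Fin m) → ℝ)
    (hμ : 0 < μ)
    (hf : ContDiff ℝ 2 f)
    (hL11 : ∀ (α : EuclideanSpace ℝ (Fin n)) (θ₁ θ₂ : EuclideanSpace ℝ (Fin m)),
      ‖gradient (fun t => f (t, α)) θ₁ - gradient (fun t => f (t, α)) θ₂‖ ≤ L₁₁ * ‖θ₁ - θ₂‖)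
    (hL12a : ∀ (α : EuclideanSpace ℝ (Fin n)) (θ₁ θ₂ : EuclideanSpace ℝ (Fin m)),
      ‖gradient (fun a => f (θ₁, a)) α - gradient (fun a => f (θ₂, a)) α‖ ≤ L₁₂ * ‖θ₁ - θ₂‖)
    (hub : ∀ θ α, f (θ, α) ≤ g θ)
    (hPL : ∀ θ α, μ * (g θ - f (θ, α)) ≤ (1 / 2) * ‖gradient (fun a => f (θ, a)) α‖ ^ 2) :
    ∀ (θ : EuclideanSpace ℝ (Fin m)) (α : EuclideanSpace ℝ (Fin n)),
      f (θ, α) = g θ →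
      HasGradientAt g (gradient (fun t => f (t, α)) θ) θ := by
  intro θ₀ α hα
  have hcrit : gradient (fun a => f (θ₀, a)) α = 0 := by
    have hmax : IsLocalMax (fun a => f (θ₀, a)) α :=
      .of_forall fun a => (hub θ₀ a).trans_eq hα.symm
    simp [gradient, hmax.fderiv_eq_zero]
  have hgap : ∀ θ, g θ - f (θ, α) ≤ L₁₂ ^ 2 / (2 * μ) * ‖θ - θ₀‖ ^ 2 := by
    intro θ
    have hgrad : ‖gradient (fun a => f (θ, a)) α‖ ≤ L₁₂ * ‖θ - θ₀‖ := by
      simpa [hcrit] using hL12a α θ θ₀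
    rw [div_mul_eq_mul_div, le_div_iff₀ (by positivity)]
    nlinarith [hPL θ α, pow_le_pow_left₀ (norm_nonneg _) hgrad 2]
  have hfd := hf.differentiable two_ne_zero
  have htaylor := abs_sub_sub_inner_gradient_le (φ := fun t => f (t, α)) (by fun_prop)
    (LipschitzWith.of_dist_le' (by simpa only [dist_eq_norm] using hL11 α)) θ₀
  refine hasGradientAt_of_abs_sub_sub_inner_le (C := L₁₁.toNNReal + L₁₂ ^ 2 / (2 * μ))
    (.of_forall fun θ => abs_le.2 ⟨?_, ?_⟩) <;>
  nlinarith [abs_le.1 (htaylor θ), hub θ α, hgap θ]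

/-- Danskin-type result under the PL-game assumptions: the max-function
`g(θ) = max_α f(θ, α)` has gradient `∇g(θ) = ∇_θ f(θ, α)` at `θ`, for every
maximizer `α ∈ A(θ)`. -/
theorem danskin_gradient_of_max
    (m n : ℕ)
    (f : EuclideanSpace ℝ (Fin m) × EuclideanSpace ℝ (Fin n) → ℝ)
    (μ L₁₁ L₂₂ L₁₂ : ℝ) (g : EuclideanSpace ℝ (Fin m) → ℝ)
    (hμ : 0 < μ)
    (hf : ContDiff ℝ 2 f)
    (hL11 : ∀ (α : EuclideanSpace ℝ (Fin n)) (θ₁ θ₂ : EuclideanSpace ℝ (Fin m)),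
      ‖gradient (fun t => f (t, α)) θ₁ - gradient (fun t => f (t, α)) θ₂‖ ≤ L₁₁ * ‖θ₁ - θ₂‖)
    (hL22 : ∀ (θ : EuclideanSpace ℝ (Fin m)) (α₁ α₂ : EuclideanSpace ℝ (Fin n)),
      ‖gradient (fun a => f (θ, a)) α₁ - gradient (fun a => f (θ, a)) α₂‖ ≤ L₂₂ * ‖α₁ - α₂‖)
    (hL12a : ∀ (α : EuclideanSpace ℝ (Fin n)) (θ₁ θ₂ : EuclideanSpace ℝ (Fin m)),
      ‖gradient (fun a => f (θ₁, a)) α - gradient (fun a => f (θ₂, a)) α‖ ≤ L₁₂ * ‖θ₁ - θ₂‖)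
    (hL12b : ∀ (θ : EuclideanSpace ℝ (Fin m)) (α₁ α₂ : EuclideanSpace ℝ (Fin n)),
      ‖gradient (fun t => f (t, α₁)) θ - gradient (fun t => f (t, α₂)) θ‖ ≤ L₁₂ * ‖α₁ - α₂‖)
    (hub : ∀ θ α, f (θ, α) ≤ g θ)
    (hattained : ∀ θ, ∃ α, f (θ, α) = g θ)
    (hclosed : ∀ θ, IsClosed {α | f (θ, α) = g θ})
    (hPL : ∀ θ α, μ * (g θ - f (θ, α)) ≤ (1 / 2) * ‖gradient (fun a => f (θ, a)) α‖ ^ 2) :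
    ∀ (θ : EuclideanSpace ℝ (Fin m)) (α : EuclideanSpace ℝ (Fin n)),
      f (θ, α) = g θ →
      HasGradientAt g (gradient (fun t => f (t, α)) θ) θ :=
  danskin_gradient_of_max_general m n f μ L₁₁ L₁₂ g hμ hf hL11 hL12a hub hPL
end

section
/- Let h : ℝⁿ → ℝ be μ-PL and L-smooth with attained minimum value h* = min h. If x_{k+1} = x_k − (1/L)∇h(x_k) for k = 0, …, K−1 starting from x₀, then h(x_K) − h* ≤ (1 − μ/L)^K (h(x₀) − h*). -/
/-!
Along the segment from `x` to `x + v`, the `L`-Lipschitz gradient gives the descent lemma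
`f (x + v) ≤ f x + ⟪∇f x, v⟫ + L/2 ‖v‖²`; for the step `v = -(1/L) ∇f x` it says that one step
lowers `f` by at least `‖∇f x‖² / (2L)`. The PL inequality bounds this decrease from below by
`μ/L` times the gap `f x - f*`, so the gap contracts by the factor `1 - μ/L` at every step.
-/

open scoped InnerProductSpace

variable {E : Type*} [NormedAddCommGroup E] [InnerProductSpace ℝ E] [CompleteSpace E]
  {f : E → ℝ} {L : ℝ}

theorem hasDerivAt_comp_add_smul (hf : Differentiable ℝ f) (x v : E) (t : ℝ) :
    HasDerivAt (fun s : ℝ => f (x + s • v)) ⟪gradient f (x + t • v), v⟫_ℝ t := by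
  have hline : HasDerivAt (fun s : ℝ => x + s • v) v t := by
    simpa using ((hasDerivAt_id t).smul_const v).const_add x
  have hgrad := (hf (x + t • v)).hasGradientAt.hasFDerivAt.comp_hasDerivAt t hline
  simp only [InnerProductSpace.toDual_apply_apply] at hgrad
  exact hgrad

theorem inner_gradient_add_smul_le
    (hsmooth : ∀ x y, ‖gradient f x - gradient f y‖ ≤ L * ‖x - y‖)
    (x v : E) {t : ℝ} (ht : 0 ≤ t) :
    ⟪gradient f (x + t • v), v⟫_ℝ ≤ ⟪gradient f x, v⟫_ℝ + L * t * ‖v‖ ^ 2 := by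
  have hlip : ‖gradient f (x + t • v) - gradient f x‖ ≤ L * (t * ‖v‖) := by
    simpa [norm_smul, abs_of_nonneg ht] using hsmooth (x + t • v) x
  have hcs := real_inner_le_norm (gradient f (x + t • v) - gradient f x) v
  rw [inner_sub_left] at hcs
  nlinarith [mul_le_mul_of_nonneg_right hlip (norm_nonneg v)]

theorem le_add_inner_gradient_add_sq_norm (hf : Differentiable ℝ f)
    (hsmooth : ∀ x y, ‖gradient f x - gradient f y‖ ≤ L * ‖x - y‖) (x v : E) :
    f (x + v) ≤ f x + ⟪gradient f x, v⟫_ℝ + L / 2 * ‖v‖ ^ 2 := by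
  set B : ℝ → ℝ := fun t => f x + t * ⟪gradient f x, v⟫_ℝ + L / 2 * t ^ 2 * ‖v‖ ^ 2
  have hB : ∀ t, HasDerivAt B (⟪gradient f x, v⟫_ℝ + L * t * ‖v‖ ^ 2) t := fun t => by
    have hsum := (((hasDerivAt_id t).mul_const ⟪gradient f x, v⟫_ℝ).const_add (f x)).add
      (((hasDerivAt_pow 2 t).const_mul (L / 2)).mul_const (‖v‖ ^ 2))
    exact hsum.congr_deriv (by push_cast; ring)
  have hfB := image_le_of_deriv_right_le_deriv_boundary (a := 0) (b := 1)
    (fun t _ => (hasDerivAt_comp_add_smul hf x v t).continuousAt.continuousWithinAt)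
    (fun t _ => (hasDerivAt_comp_add_smul hf x v t).hasDerivWithinAt)
    (by simp [B]) (fun t _ => (hB t).continuousAt.continuousWithinAt)
    (fun t _ => (hB t).hasDerivWithinAt)
    (fun t ht => inner_gradient_add_smul_le hsmooth x v ht.1)
    (Set.right_mem_Icc.2 zero_le_one)
  simpa [B] using hfB

theorem gradient_step_le_sub_sq_norm (hL : 0 < L) (hf : Differentiable ℝ f)
    (hsmooth : ∀ x y, ‖gradient f x - gradient f y‖ ≤ L * ‖x - y‖) (x : E) :
    f (x - (1 / L) • gradient f x) ≤ f x - 1 / (2 * L) * ‖gradient f x‖ ^ 2 := by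
  have hdesc := le_add_inner_gradient_add_sq_norm hf hsmooth x (-((1 / L) • gradient f x))
  rw [← sub_eq_add_neg, inner_neg_right, norm_neg, real_inner_smul_right,
    real_inner_self_eq_norm_sq, norm_smul, Real.norm_of_nonneg (by positivity)] at hdesc
  convert hdesc using 1
  field_simp
  ring

theorem gradient_step_sub_le_of_PL (hL : 0 < L) (hf : Differentiable ℝ f)
    (hsmooth : ∀ x y, ‖gradient f x - gradient f y‖ ≤ L * ‖x - y‖) {μ fstar : ℝ} {x : E}
    (hPL : μ * (f x - fstar) ≤ 1 / 2 * ‖gradient f x‖ ^ 2) :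
    f (x - (1 / L) • gradient f x) - fstar ≤ (1 - μ / L) * (f x - fstar) := by
  have hstep := gradient_step_le_sub_sq_norm hL hf hsmooth x
  have hgap : μ / L * (f x - fstar) ≤ 1 / (2 * L) * ‖gradient f x‖ ^ 2 := by
    calc μ / L * (f x - fstar) = 1 / L * (μ * (f x - fstar)) := by ring
      _ ≤ 1 / L * (1 / 2 * ‖gradient f x‖ ^ 2) := by gcongr
      _ = 1 / (2 * L) * ‖gradient f x‖ ^ 2 := by ring
  linarith

theorem gradient_descent_PL_linear_convergence_general
    (d : ℕ) (h : EuclideanSpace ℝ (Fin d) → ℝ) (μ L hstar : ℝ)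
    (hL : 0 < L) (hμL : μ ≤ L)
    (hdiff : Differentiable ℝ h)
    (hsmooth : ∀ x y, ‖gradient h x - gradient h y‖ ≤ L * ‖x - y‖)
    (hPL : ∀ x, μ * (h x - hstar) ≤ (1 / 2) * ‖gradient h x‖ ^ 2)
    (x : ℕ → EuclideanSpace ℝ (Fin d))
    (hiter : ∀ k, x (k + 1) = x k - (1 / L) • gradient h (x k)) :
    ∀ K : ℕ, h (x K) - hstar ≤ (1 - μ / L) ^ K * (h (x 0) - hstar) := by
  intro K
  have hrate : 0 ≤ 1 - μ / L := sub_nonneg.2 ((div_le_one hL).2 hμL)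
  refine le_geom (u := fun k => h (x k) - hstar) hrate K fun k _ => ?_
  simpa only [hiter k] using gradient_step_sub_le_of_PL hL hdiff hsmooth (hPL (x k))

/-- Linear convergence of gradient descent for `μ`-PL, `L`-smooth functions:
if `x_{k+1} = x_k - (1/L) ∇h(x_k)`, then
`h(x_K) - h* ≤ (1 - μ/L)^K (h(x₀) - h*)`. -/
theorem gradient_descent_PL_linear_convergence
    (d : ℕ) (h : EuclideanSpace ℝ (Fin d) → ℝ) (μ L hstar : ℝ)
    (hμ : 0 < μ) (hL : 0 < L) (hμL : μ ≤ L)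
    (hdiff : Differentiable ℝ h)
    (hsmooth : ∀ x y, ‖gradient h x - gradient h y‖ ≤ L * ‖x - y‖)
    (hlb : ∀ x, hstar ≤ h x)
    (hattained : ∃ x, h x = hstar)
    (hPL : ∀ x, μ * (h x - hstar) ≤ (1 / 2) * ‖gradient h x‖ ^ 2)
    (x : ℕ → EuclideanSpace ℝ (Fin d))
    (hiter : ∀ k, x (k + 1) = x k - (1 / L) • gradient h (x k)) :
    ∀ K : ℕ, h (x K) - hstar ≤ (1 - μ / L) ^ K * (h (x 0) - hstar) :=
  gradient_descent_PL_linear_convergence_general d h μ L hstar hL hμL hdiff hsmooth hPL x hiter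
end

section
/- Let g : ℝᵐ → ℝ be differentiable with L-Lipschitz gradient (L > 0), bounded below with infimum g*, and Δ_g ≥ g(θ₀) − g*. Given ε > 0, suppose θ_{t+1} = θ_t − (1/L) G_t for t = 0, …, T−1 with ‖G_t − ∇g(θ_t)‖ ≤ ε/4 for all t, and T ≥ 18LΔ_g/ε². Then there exists t ∈ {0, 1, …, T−1} such that ‖∇g(θ_t)‖ ≤ (5/12)ε. -/
/-!
Smoothness gives the descent lemma `g y ≤ g x + ⟪∇g x, y - x⟫ + L/2 ‖y - x‖²`; for the step
`y = x - G/L` the right-hand side equals `g x - (‖∇g x‖² - ‖G - ∇g x‖²) / (2L)`. If every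
`‖∇g(θ_t)‖` with `t < T` exceeded `5ε/12`, each step would therefore lower `g` by more than
`(25/144 - 9/144) ε² / (2L) = ε² / (18L)`, so `T` steps would lower it by more than `Δ_g`,
contradicting `g ≥ g*`.
-/

open InnerProductSpace Set

section Descent

variable {F : Type*} [NormedAddCommGroup F] [InnerProductSpace ℝ F] [CompleteSpace F]
  {g : F → ℝ} {L : ℝ}

theorem hasDerivAt_apply_add_smul (hdiff : Differentiable ℝ g) (x v : F)
    (t : ℝ) :
    HasDerivAt (fun s : ℝ => g (x + s • v)) (inner ℝ (gradient g (x + t • v)) v) t := by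
  have hline : HasDerivAt (fun s : ℝ => x + s • v) v t := by
    simpa using ((hasDerivAt_id t).smul_const v).const_add x
  simpa [Function.comp_def, toDual_apply_apply] using
    (hdiff (x + t • v)).hasGradientAt.hasFDerivAt.comp_hasDerivAt t hline

theorem le_add_inner_gradient_add_sq_of_lipschitz_gradient (hdiff : Differentiable ℝ g)
    (hsmooth : ∀ x y, ‖gradient g x - gradient g y‖ ≤ L * ‖x - y‖) (x y : F) :
    g y ≤ g x + inner ℝ (gradient g x) (y - x) + L / 2 * ‖y - x‖ ^ 2 := by
  set v := y - x
  set φ : ℝ → ℝ := fun t => g (x + t • v) - g x - t * inner ℝ (gradient g x) v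
  have hφ : ∀ t, HasDerivAt φ (inner ℝ (gradient g (x + t • v) - gradient g x) v) t := by
    intro t
    rw [inner_sub_left, ← one_mul (inner ℝ (gradient g x) v)]
    exact ((hasDerivAt_apply_add_smul hdiff x v t).sub_const (g x)).sub
      ((hasDerivAt_id' t).mul_const _)
  have hbound : ∀ t ∈ Ici (0 : ℝ),
      ‖inner ℝ (gradient g (x + t • v) - gradient g x) v‖ ≤ L * ‖v‖ ^ 2 * t := by
    intro t (ht : 0 ≤ t)
    calc ‖inner ℝ (gradient g (x + t • v) - gradient g x) v‖
        ≤ ‖gradient g (x + t • v) - gradient g x‖ * ‖v‖ := norm_inner_le_norm _ _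
      _ ≤ L * ‖x + t • v - x‖ * ‖v‖ := by gcongr; exact hsmooth _ _
      _ = L * ‖v‖ ^ 2 * t := by
        rw [add_sub_cancel_left, norm_smul, Real.norm_of_nonneg ht]; ring
  -- `φ 0 = 0` and `|φ'(t)| ≤ L ‖v‖² t`, so `|φ t|` stays below the solution `L/2 ‖v‖² t²`.
  have hB : ∀ t, HasDerivAt (fun t => L / 2 * ‖v‖ ^ 2 * t ^ 2) (L * ‖v‖ ^ 2 * t) t := fun t =>
    ((hasDerivAt_pow 2 t).const_mul (L / 2 * ‖v‖ ^ 2)).congr_deriv (by norm_num; ring)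
  have hφ1 : ‖φ 1‖ ≤ L / 2 * ‖v‖ ^ 2 * 1 ^ 2 :=
    image_norm_le_of_norm_deriv_right_le_deriv_boundary (a := 0) (b := 1)
      (fun t _ => (hφ t).continuousAt.continuousWithinAt) (fun t _ => (hφ t).hasDerivWithinAt)
      (by simp [φ]) hB (fun t ht => hbound t ht.1) (right_mem_Icc.2 zero_le_one)
  have hφ1' := (le_abs_self (φ 1)).trans hφ1
  simp only [φ, v, one_smul, one_mul, one_pow, mul_one, add_sub_cancel] at hφ1'
  linarith

theorem le_sub_of_inexact_gradient_step (hL : L ≠ 0) (hdiff : Differentiable ℝ g)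
    (hsmooth : ∀ x y, ‖gradient g x - gradient g y‖ ≤ L * ‖x - y‖) (x G : F) :
    g (x - (1 / L) • G) ≤
      g x - (‖gradient g x‖ ^ 2 - ‖G - gradient g x‖ ^ 2) / (2 * L) := by
  have hdescent := le_add_inner_gradient_add_sq_of_lipschitz_gradient hdiff hsmooth x
    (x - (1 / L) • G)
  rw [sub_sub_cancel_left, inner_neg_right, inner_smul_right, norm_neg, norm_smul,
    real_inner_comm, Real.norm_eq_abs, mul_pow, sq_abs] at hdescent
  convert hdescent using 1
  rw [norm_sub_sq_real]
  field_simp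
  ring

end Descent

theorem add_mul_lt_of_forall_succ_add_lt {f : ℕ → ℝ} {c : ℝ} {T : ℕ} (hT : 0 < T)
    (h : ∀ t < T, f (t + 1) + c < f t) : f T + T * c < f 0 := by
  have hsum : ∑ _t ∈ Finset.range T, c < ∑ t ∈ Finset.range T, (f t - f (t + 1)) :=
    Finset.sum_lt_sum_of_nonempty (Finset.nonempty_range_iff.2 hT.ne')
      fun t ht => by linarith [h t (Finset.mem_range.1 ht)]
  rw [Finset.sum_range_sub', Finset.sum_const, Finset.card_range, nsmul_eq_mul] at hsum
  linarith

/-- Lemma 3: inexact gradient descent with error at most `ε/4` per step finds, within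
`T ≥ 18LΔ_g/ε²` iterations, a point with `‖∇g(θ_t)‖ ≤ (5/12)ε`. -/
theorem inexact_gradient_descent_finds_stationary
    (m : ℕ) (g : EuclideanSpace ℝ (Fin m) → ℝ) (L gstar Δg ε : ℝ)
    (hL : 0 < L) (hε : 0 < ε)
    (hdiff : Differentiable ℝ g)
    (hsmooth : ∀ x y, ‖gradient g x - gradient g y‖ ≤ L * ‖x - y‖)
    (hlb : ∀ x, gstar ≤ g x)
    (θ : ℕ → EuclideanSpace ℝ (Fin m)) (G : ℕ → EuclideanSpace ℝ (Fin m))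
    (hinit : g (θ 0) - gstar ≤ Δg)
    (herr : ∀ t, ‖G t - gradient g (θ t)‖ ≤ ε / 4)
    (hiter : ∀ t, θ (t + 1) = θ t - (1 / L) • G t)
    (T : ℕ) (hT : (T : ℝ) ≥ 18 * L * Δg / ε ^ 2) (hTpos : 0 < T) :
    ∃ t < T, ‖gradient g (θ t)‖ ≤ (5 / 12) * ε := by
  by_contra! hlarge
  have hstep : ∀ t < T, g (θ (t + 1)) + ε ^ 2 / (18 * L) < g (θ t) := by
    intro t ht
    have hdecrease := le_sub_of_inexact_gradient_step hL.ne' hdiff hsmooth (θ t) (G t)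
    have herr_sq := pow_le_pow_left₀ (norm_nonneg _) (herr t) 2
    have hgrad_sq := pow_lt_pow_left₀ (hlarge t ht) (by positivity) two_ne_zero
    have hgap : ε ^ 2 / (18 * L) <
        (‖gradient g (θ t)‖ ^ 2 - ‖G t - gradient g (θ t)‖ ^ 2) / (2 * L) := by
      rw [show 18 * L = 9 * (2 * L) by ring, ← div_div]
      exact div_lt_div_of_pos_right (by nlinarith) (by positivity)
    rw [hiter]
    linarith
  have hdrop := add_mul_lt_of_forall_succ_add_lt (f := fun t => g (θ t)) hTpos hstep
  have hbudget : Δg ≤ T * (ε ^ 2 / (18 * L)) := by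
    rw [ge_iff_le, div_le_iff₀ (by positivity)] at hT
    rw [mul_div_assoc', le_div_iff₀ (by positivity)]
    linarith
  linarith [hlb (θ T)]
end
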